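/- arXiv:2512.17307 — 2 statements merged into one kernel-verified Lean document; each statement's English description precedes it below -/
import Mathlib

section
/- Let N ≥ 1, let s ∈ ℝ with s ≠ −1, and let T be an N×N complex Hermitian matrix satisfying (s+1)·(J₊·T) = (s−1)·(T·J₊). Then T is diagonal and, with s' = (s−1)/(s+1), its diagonal entries satisfy T_{a,a} = s'^{(N−1−a)} · T_{N−1,N−1} for every a = 0,…,N−1. -/
open Matrix

/-- Ladder coefficients c_a = √((N−1−a)(a+1)), so that c_{N−1} = 0. -/
noncomputable def spinC (N a : ℕ) : ℝ :=
  Real.sqrt (((N : ℝ) - 1 - a) * (a + 1))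

/-- Raising operator J₊: (J₊)_{a+1,a} = c_a, all other entries 0. -/
noncomputable def Jp (N : ℕ) : Matrix (Fin N) (Fin N) ℂ :=
  Matrix.of fun a b => if (a : ℕ) = (b : ℕ) + 1 then ((spinC N b : ℝ) : ℂ) else 0

/-- Lowering operator J₋ = J₊ᵀ. -/
noncomputable def Jm (N : ℕ) : Matrix (Fin N) (Fin N) ℂ := (Jp N)ᵀ

/-- J_z = diag(a − (N−1)/2). -/
noncomputable def Jz (N : ℕ) : Matrix (Fin N) (Fin N) ℂ :=
  Matrix.diagonal fun a => ((a : ℂ) - ((N : ℂ) - 1) / 2)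

/-- J_x = (J₊ + J₋)/2. -/
noncomputable def Jx (N : ℕ) : Matrix (Fin N) (Fin N) ℂ :=
  (1 / 2 : ℂ) • (Jp N + Jm N)

/-- J_y = (J₊ − J₋)/(2i). -/
noncomputable def Jy (N : ℕ) : Matrix (Fin N) (Fin N) ℂ :=
  (1 / (2 * Complex.I)) • (Jp N - Jm N)

lemma spinC_ne_zero (N a : ℕ) (h : a + 1 < N) : ((spinC N a : ℝ) : ℂ) ≠ 0 := by
  have h1 : (0:ℝ) < ((N:ℝ) - 1 - a) * (a + 1) := by
    have : (a:ℝ) + 1 < (N:ℝ) := by exact_mod_cast h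
    nlinarith [Nat.cast_nonneg (α := ℝ) a]
  have h2 : 0 < spinC N a := Real.sqrt_pos.mpr h1
  exact_mod_cast h2.ne'

lemma Jp_mul_apply (N : ℕ) (T : Matrix (Fin N) (Fin N) ℂ) (a : Fin N)
    (h : (a:ℕ) + 1 < N) (b : Fin N) :
    (Jp N * T) ⟨(a:ℕ)+1, h⟩ b = ((spinC N a : ℝ) : ℂ) * T a b := by
  rw [Matrix.mul_apply, Finset.sum_eq_single a]
  · simp [Jp]
  · intro k _ hk
    rw [Jp]
    simp only [of_apply]
    rw [if_neg, zero_mul]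
    intro hv
    exact hk (Fin.ext (by omega)).symm
  · intro h'; exact absurd (Finset.mem_univ a) h'

lemma mul_Jp_apply (N : ℕ) (T : Matrix (Fin N) (Fin N) ℂ) (a b : Fin N) :
    (T * Jp N) a b =
      if h : (b:ℕ) + 1 < N then T a ⟨(b:ℕ)+1, h⟩ * ((spinC N b : ℝ) : ℂ) else 0 := by
  rw [Matrix.mul_apply]
  split
  · next h =>
    rw [Finset.sum_eq_single (⟨(b:ℕ)+1, h⟩ : Fin N)]
    · simp [Jp]
    · intro k _ hk
      rw [Jp]
      simp only [of_apply]
      rw [if_neg, mul_zero]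
      intro hv
      exact hk (Fin.ext hv)
    · intro h'; exact absurd (Finset.mem_univ _) h'
  · next h =>
    apply Finset.sum_eq_zero
    intro k _
    rw [Jp]
    simp only [of_apply]
    rw [if_neg, mul_zero]
    intro hv
    exact h (hv ▸ k.isLt)

/-- Condition 1 solutions: a Hermitian T with (s+1)·J₊T = (s−1)·TJ₊ is diagonal,
with T_{a,a} = s'^(N−1−a)·T_{N−1,N−1} where s' = (s−1)/(s+1). -/
theorem condition1_diagonal (N : ℕ) (hN : 1 ≤ N) (s : ℝ) (hs : s ≠ -1)
    (T : Matrix (Fin N) (Fin N) ℂ) (hT : T.IsHermitian)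
    (heq : ((s : ℂ) + 1) • (Jp N * T) = ((s : ℂ) - 1) • (T * Jp N)) :
    (∀ a b : Fin N, a ≠ b → T a b = 0) ∧
    (∀ a : Fin N,
      T a a = (((s - 1) / (s + 1) : ℝ) : ℂ) ^ (N - 1 - (a : ℕ)) *
        T ⟨N - 1, by omega⟩ ⟨N - 1, by omega⟩) := by
  have hs1 : (s:ℂ) + 1 ≠ 0 := by
    intro h
    apply hs
    have : (s:ℂ) = -1 := by linear_combination h
    exact_mod_cast this
  have key : ∀ (a b : Fin N) (h : (a:ℕ) + 1 < N),
      ((s:ℂ) + 1) * (((spinC N a : ℝ) : ℂ) * T a b) =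
      ((s:ℂ) - 1) * (if h2 : (b:ℕ)+1 < N then
        T ⟨(a:ℕ)+1, h⟩ ⟨(b:ℕ)+1, h2⟩ * ((spinC N b : ℝ) : ℂ) else 0) := by
    intro a b h
    have h0 := congrFun (congrFun heq ⟨(a:ℕ)+1, h⟩) b
    simpa [Matrix.smul_apply, smul_eq_mul, Jp_mul_apply N T a h b,
      mul_Jp_apply N T ⟨(a:ℕ)+1, h⟩ b] using h0
  have upper : ∀ k : ℕ, ∀ a b : Fin N, N - 1 - (b:ℕ) = k → (a:ℕ) < (b:ℕ) → T a b = 0 := by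
    intro k
    induction k with
    | zero =>
      intro a b hb hab
      have hbl := b.isLt
      have ha : (a:ℕ) + 1 < N := by omega
      have hk := key a b ha
      rw [dif_neg (by omega), mul_zero] at hk
      rcases mul_eq_zero.mp hk with h | h
      · exact absurd h hs1
      · rcases mul_eq_zero.mp h with h | h
        · exact absurd h (spinC_ne_zero N a (by omega))
        · exact h
    | succ k ih =>
      intro a b hb hab
      have hbl := b.isLt
      have ha : (a:ℕ) + 1 < N := by omega
      have hb2 : (b:ℕ) + 1 < N := by omega
      have hk := key a b ha
      rw [dif_pos hb2] at hk
      have h0 : T ⟨(a:ℕ)+1, ha⟩ ⟨(b:ℕ)+1, hb2⟩ = 0 := by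
        apply ih
        · simp; omega
        · simp; omega
      rw [h0, zero_mul, mul_zero] at hk
      rcases mul_eq_zero.mp hk with h | h
      · exact absurd h hs1
      · rcases mul_eq_zero.mp h with h | h
        · exact absurd h (spinC_ne_zero N a (by omega))
        · exact h
  have offdiag : ∀ a b : Fin N, a ≠ b → T a b = 0 := by
    intro a b hab
    rcases lt_trichotomy (a:ℕ) (b:ℕ) with h | h | h
    · exact upper _ a b rfl h
    · exact absurd (Fin.ext h) hab
    · have h0 : T b a = 0 := upper _ b a rfl h
      have h1 := congrFun (congrFun hT a) b
      rw [Matrix.conjTranspose_apply] at h1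
      rw [← h1, h0]
      simp
  have hcast : (((s - 1) / (s + 1) : ℝ) : ℂ) = ((s:ℂ) - 1) / ((s:ℂ) + 1) := by push_cast; ring
  have step : ∀ (a : Fin N) (h : (a:ℕ) + 1 < N),
      T a a = (((s - 1) / (s + 1) : ℝ) : ℂ) * T ⟨(a:ℕ)+1, h⟩ ⟨(a:ℕ)+1, h⟩ := by
    intro a h
    have hk := key a a h
    rw [dif_pos h] at hk
    have hc := spinC_ne_zero N a h
    have h2 : (((s:ℂ) + 1) * T a a) * ((spinC N a : ℝ) : ℂ) =
        (((s:ℂ) - 1) * T ⟨(a:ℕ)+1, h⟩ ⟨(a:ℕ)+1, h⟩) * ((spinC N a : ℝ) : ℂ) := by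
      linear_combination hk
    have h3 := mul_right_cancel₀ hc h2
    rw [hcast]
    field_simp
    linear_combination h3
  have diag : ∀ k : ℕ, ∀ a : Fin N, N - 1 - (a:ℕ) = k →
      T a a = (((s - 1) / (s + 1) : ℝ) : ℂ) ^ k *
        T ⟨N - 1, by omega⟩ ⟨N - 1, by omega⟩ := by
    intro k
    induction k with
    | zero =>
      intro a ha
      have hal := a.isLt
      have : a = ⟨N - 1, by omega⟩ := Fin.ext (by simp; omega)
      rw [this]
      simp
    | succ k ih =>
      intro a ha
      have hal := a.isLt
      have h : (a:ℕ) + 1 < N := by omega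
      rw [step a h, ih ⟨(a:ℕ)+1, h⟩ (by simp; omega)]
      ring
  exact ⟨offdiag, fun a => diag _ a rfl⟩
end

section
/- Let N ≥ 1 be an integer, let k > 0 be real, and let a ∈ {0,…,N−1}. Define the vector v = exp(−(log k / 2)·J_z) · (exp(−i·(π/2)·J_y) · e_a) ∈ ℂ^N, where e_a is the a-th standard basis vector and exp is the matrix exponential. Then ((1/√k)·J₊ + √k·J₋) · v = (2a − (N−1)) · v; i.e., v is an eigenvector of k^{−1/2}·J₊ + k^{1/2}·J₋ with eigenvalue 2a − (N−1) = 2m (where m = a − j). -/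
open Matrix

/-! Only the sl₂ relations `⁅J_z, J₊⁆ = J₊`, `⁅J_z, J₋⁆ = -J₋`, `⁅J₊, J₋⁆ = 2 J_z` are used.
If `⁅X, E⁆ = c E` then `exp X * E = exp c • E * exp X`. Hence `exp (s J_z)` rescales `J₊, J₋` by
`e^{±s}`, which for `s = -(log k)/2` turns `k^{-1/2} J₊ + k^{1/2} J₋` into `J₊ + J₋`; and the
quarter turn `exp (-i(π/2) J_y) = exp (-(π/4)(J₊ - J₋))` carries `J₊ + J₋` to `2 J_z`, which acts
on `e_a` by `2a - (N - 1)`. -/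

attribute [local instance] LieRing.ofAssociativeRing

namespace Matrix

variable {n : Type*} [Fintype n] [DecidableEq n]

theorem semiconjBy_exp_right {x a b : Matrix n n ℂ} (h : SemiconjBy x a b) :
    SemiconjBy x (NormedSpace.exp a) (NormedSpace.exp b) :=
  open scoped Norms.Operator in h.exp_right

theorem exp_add_smul_one (X : Matrix n n ℂ) (c : ℂ) :
    NormedSpace.exp (X + c • 1) = Complex.exp c • NormedSpace.exp X := by
  rw [exp_add_of_commute _ _ ((Commute.one_right X).smul_right c), smul_one_eq_diagonal,
    exp_diagonal, Pi.exp_def, ← Complex.exp_eq_exp_ℂ, ← smul_one_eq_diagonal, mul_smul_comm,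
    mul_one]

theorem exp_mul_of_lie_eq_smul {X E : Matrix n n ℂ} {c : ℂ} (h : ⁅X, E⁆ = c • E) :
    NormedSpace.exp X * E = Complex.exp c • (E * NormedSpace.exp X) := by
  have hsemi : SemiconjBy E (X + c • 1) X := by
    rw [SemiconjBy, mul_add, mul_smul_comm, mul_one, ← h, Ring.lie_def]
    abel
  rw [← (semiconjBy_exp_right hsemi).eq, exp_add_smul_one, mul_smul_comm]

section Sl2

variable {P Q Z : Matrix n n ℂ}

theorem exp_smul_mul_add_eq_mul_exp_smul (hZP : ⁅Z, P⁆ = P) (hZQ : ⁅Z, Q⁆ = -Q) (s : ℂ) :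
    NormedSpace.exp (s • Z) * (P + Q)
      = (Complex.exp s • P + Complex.exp (-s) • Q) * NormedSpace.exp (s • Z) := by
  have hP : ⁅s • Z, P⁆ = s • P := by rw [smul_lie, hZP]
  have hQ : ⁅s • Z, Q⁆ = (-s) • Q := by rw [smul_lie, hZQ, smul_neg, neg_smul]
  rw [mul_add, exp_mul_of_lie_eq_smul hP, exp_mul_of_lie_eq_smul hQ, add_mul,
    smul_mul_assoc, smul_mul_assoc]

theorem lie_sub_add_smul (hZP : ⁅Z, P⁆ = P) (hZQ : ⁅Z, Q⁆ = -Q) (hPQ : ⁅P, Q⁆ = (2 : ℂ) • Z)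
    {w : ℂ} (hw : w ^ 2 = -4) : ⁅P - Q, P + Q + w • Z⁆ = (-w) • (P + Q + w • Z) := by
  have hQP : ⁅Q, P⁆ = -((2 : ℂ) • Z) := by rw [← lie_skew, hPQ]
  have hPZ : ⁅P, Z⁆ = -P := by rw [← lie_skew, hZP]
  have hQZ : ⁅Q, Z⁆ = Q := by rw [← lie_skew, hZQ, neg_neg]
  simp only [sub_lie, lie_add, lie_smul, lie_self, hPQ, hQP, hPZ, hQZ]
  have : (-w) • w • Z = (4 : ℂ) • Z := by rw [smul_smul, neg_mul, ← sq, hw, neg_neg]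
  rw [smul_add, this]
  module

theorem add_mul_exp_rotation (hZP : ⁅Z, P⁆ = P) (hZQ : ⁅Z, Q⁆ = -Q) (hPQ : ⁅P, Q⁆ = (2 : ℂ) • Z) :
    (P + Q) * NormedSpace.exp ((-(Real.pi / 4 : ℂ)) • (P - Q))
      = NormedSpace.exp ((-(Real.pi / 4 : ℂ)) • (P - Q)) * ((2 : ℂ) • Z) := by
  set R := NormedSpace.exp ((-(Real.pi / 4 : ℂ)) • (P - Q))
  have hrot : ∀ w : ℂ, w ^ 2 = -4 →
      R * (P + Q + w • Z) = Complex.exp (Real.pi / 4 * w) • ((P + Q + w • Z) * R) := by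
    intro w hw
    refine exp_mul_of_lie_eq_smul ?_
    rw [smul_lie, lie_sub_add_smul hZP hZQ hPQ hw, smul_smul]
    ring_nf
  have hplus := hrot (2 * Complex.I) (by ring_nf; simp)
  have hminus := hrot (-(2 * Complex.I)) (by ring_nf; simp)
  have e1 : Complex.exp (Real.pi / 4 * (2 * Complex.I)) = Complex.I := by
    rw [show (Real.pi / 4 * (2 * Complex.I) : ℂ) = Real.pi / 2 * Complex.I by ring,
      Complex.exp_pi_div_two_mul_I]
  have e2 : Complex.exp (Real.pi / 4 * -(2 * Complex.I)) = -Complex.I := by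
    rw [show (Real.pi / 4 * -(2 * Complex.I) : ℂ) = -(Real.pi / 2 * Complex.I) by ring,
      Complex.exp_neg, Complex.exp_pi_div_two_mul_I, Complex.inv_I]
  rw [e1] at hplus
  rw [e2] at hminus
  -- `P + Q` and `2 • Z` are combinations of the two eigenvectors of `ad (P - Q)` used above
  set Fp := P + Q + (2 * Complex.I) • Z
  set Fm := P + Q + (-(2 * Complex.I)) • Z
  have hZ : (2 : ℂ) • Z = (-(Complex.I / 2)) • (Fp - Fm) := by
    linear_combination (norm := module) (2 * Complex.I_sq) • Z
  have hPQ' : P + Q = (1 / 2 : ℂ) • (Fp + Fm) := by module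
  rw [hZ, mul_smul_comm, mul_sub, hplus, hminus, hPQ', smul_mul_assoc, add_mul]
  linear_combination (norm := module) (Complex.I_sq / 2) • (Fp * R + Fm * R)

end Sl2

end Matrix

theorem spinC_mul_self {N a : ℕ} (ha : a < N) :
    (spinC N a : ℂ) * spinC N a = ((N : ℂ) - 1 - a) * (a + 1) := by
  have hnonneg : (0 : ℝ) ≤ ((N : ℝ) - 1 - a) * (a + 1) := by
    have : (a : ℝ) + 1 ≤ N := by exact_mod_cast ha
    nlinarith
  rw [← Complex.ofReal_mul, spinC, Real.mul_self_sqrt hnonneg]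
  push_cast
  ring

theorem Jp_apply (N : ℕ) (i j : Fin N) :
    Jp N i j = if (i : ℕ) = j + 1 then (spinC N j : ℂ) else 0 := rfl

theorem Jm_apply (N : ℕ) (i j : Fin N) :
    Jm N i j = if (j : ℕ) = i + 1 then (spinC N i : ℂ) else 0 := rfl

theorem lie_Jz_Jp (N : ℕ) : ⁅Jz N, Jp N⁆ = Jp N := by
  ext i j
  simp only [Ring.lie_def, Matrix.sub_apply, Jz, diagonal_mul, mul_diagonal, Jp_apply]
  split_ifs with h
  · push_cast [h]
    ring
  · ring

theorem lie_Jz_Jm (N : ℕ) : ⁅Jz N, Jm N⁆ = -Jm N := by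
  ext i j
  simp only [Ring.lie_def, Matrix.sub_apply, Matrix.neg_apply, Jz, diagonal_mul, mul_diagonal,
    Jm_apply]
  split_ifs with h
  · push_cast [h]
    ring
  · ring

theorem Jp_mul_Jm_apply (N : ℕ) (i j : Fin N) :
    (Jp N * Jm N) i j = if i = j then ((N : ℂ) - i) * i else 0 := by
  simp only [mul_apply, Jm_apply, Jp_apply, ite_mul, zero_mul, mul_ite, mul_zero]
  rcases Nat.eq_zero_or_pos (j : ℕ) with hj | hj
  · rw [Finset.sum_eq_zero fun b _ => if_neg (by omega)]
    split_ifs with hij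
    · simp [hij, hj]
    · rfl
  have hpred : (j : ℕ) - 1 < N := by omega
  rw [Finset.sum_eq_single ⟨(j : ℕ) - 1, hpred⟩
    (fun b _ hb => if_neg fun h => hb (Fin.ext (by simp; omega))) (by simp),
    if_pos (by simp; omega)]
  by_cases hij : i = j
  · subst hij
    rw [if_pos (by simp; omega), if_pos rfl, spinC_mul_self hpred]
    push_cast [Nat.cast_sub hj]
    ring
  · rw [if_neg fun h => hij (Fin.ext (by simp at h; omega)), if_neg hij]

theorem Jm_mul_Jp_apply (N : ℕ) (i j : Fin N) :
    (Jm N * Jp N) i j = if i = j then ((N : ℂ) - 1 - i) * (i + 1) else 0 := by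
  simp only [mul_apply, Jm_apply, Jp_apply, ite_mul, zero_mul, mul_ite, mul_zero]
  by_cases hsucc : (j : ℕ) + 1 < N
  swap
  · rw [Finset.sum_eq_zero fun b _ => if_neg (by omega)]
    split_ifs with hij
    · have hN : (N : ℂ) = i + 1 := by exact_mod_cast (by subst hij; omega : N = i + 1)
      rw [hN]
      ring
    · rfl
  rw [Finset.sum_eq_single ⟨(j : ℕ) + 1, hsucc⟩
    (fun b _ hb => if_neg fun h => hb (Fin.ext h)) (by simp), if_pos rfl]
  by_cases hij : i = j
  · subst hij
    rw [if_pos rfl, if_pos rfl, spinC_mul_self i.isLt]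
  · rw [if_neg fun h => hij (Fin.ext (by simp at h; omega)), if_neg hij]

theorem lie_Jp_Jm (N : ℕ) : ⁅Jp N, Jm N⁆ = (2 : ℂ) • Jz N := by
  ext i j
  rw [Ring.lie_def, Matrix.sub_apply, Jp_mul_Jm_apply, Jm_mul_Jp_apply, Matrix.smul_apply, Jz,
    diagonal_apply]
  split_ifs <;> simp only [smul_eq_mul] <;> ring

theorem neg_I_mul_smul_Jy (N : ℕ) (θ : ℂ) :
    -(Complex.I * θ) • Jy N = (-(θ / 2)) • (Jp N - Jm N) := by
  rw [Jy, smul_smul]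
  congr 1
  field_simp

theorem Jz_mulVec_single (N : ℕ) (a : Fin N) :
    Jz N *ᵥ Pi.single a 1 = ((a : ℂ) - ((N : ℂ) - 1) / 2) • Pi.single a 1 := by
  rw [Jz, diagonal_mulVec_single, mul_one, ← Pi.single_smul, smul_eq_mul, mul_one]

theorem squeezed_eigenvector_general (N : ℕ) (k : ℝ) (hk : 0 < k) (a : Fin N) :
    ((1 / (Real.sqrt k : ℂ)) • Jp N + ((Real.sqrt k : ℝ) : ℂ) • Jm N).mulVec
        ((NormedSpace.exp (-((Real.log k / 2 : ℝ) : ℂ) • Jz N)).mulVec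
          ((NormedSpace.exp (-(Complex.I * ((Real.pi : ℝ) / 2 : ℝ)) • Jy N)).mulVec
            (Pi.single a 1)))
      = ((2 * (a : ℝ) - ((N : ℝ) - 1) : ℝ) : ℂ) •
          (NormedSpace.exp (-((Real.log k / 2 : ℝ) : ℂ) • Jz N)).mulVec
            ((NormedSpace.exp (-(Complex.I * ((Real.pi : ℝ) / 2 : ℝ)) • Jy N)).mulVec
              (Pi.single a 1)) := by
  have hsqrt : Complex.exp ((Real.log k / 2 : ℝ) : ℂ) = (Real.sqrt k : ℂ) := by
    rw [← Complex.ofReal_exp, ← Real.log_sqrt hk.le, Real.exp_log (Real.sqrt_pos.2 hk)]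
  have hsqueeze : ((1 / (Real.sqrt k : ℂ)) • Jp N + ((Real.sqrt k : ℝ) : ℂ) • Jm N)
      * NormedSpace.exp (-((Real.log k / 2 : ℝ) : ℂ) • Jz N)
      = NormedSpace.exp (-((Real.log k / 2 : ℝ) : ℂ) • Jz N) * (Jp N + Jm N) := by
    rw [exp_smul_mul_add_eq_mul_exp_smul (lie_Jz_Jp N) (lie_Jz_Jm N), Complex.exp_neg, neg_neg,
      hsqrt, one_div]
  have hrotate : (Jp N + Jm N) * NormedSpace.exp (-(Complex.I * ((Real.pi : ℝ) / 2 : ℝ)) • Jy N)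
      = NormedSpace.exp (-(Complex.I * ((Real.pi : ℝ) / 2 : ℝ)) • Jy N) * ((2 : ℂ) • Jz N) := by
    rw [neg_I_mul_smul_Jy, show (((Real.pi / 2 : ℝ) : ℂ) / 2) = Real.pi / 4 by push_cast; ring]
    exact add_mul_exp_rotation (lie_Jz_Jp N) (lie_Jz_Jm N) (lie_Jp_Jm N)
  have hweight :
      (2 : ℂ) * ((a : ℂ) - ((N : ℂ) - 1) / 2) = ((2 * (a : ℝ) - ((N : ℝ) - 1) : ℝ) : ℂ) := by
    push_cast
    ring
  rw [mulVec_mulVec, mulVec_mulVec, hsqueeze, Matrix.mul_assoc, hrotate, ← mulVec_mulVec,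
    ← mulVec_mulVec, smul_mulVec, Jz_mulVec_single, smul_smul, hweight, mulVec_smul,
    mulVec_smul]

/-- The vector exp(−(ln k/2)J_z)·exp(−i(π/2)J_y)·e_a is an eigenvector of
k^{−1/2}J₊ + k^{1/2}J₋ with eigenvalue 2a − (N−1). -/
theorem squeezed_eigenvector (N : ℕ) (hN : 1 ≤ N) (k : ℝ) (hk : 0 < k) (a : Fin N) :
    ((1 / (Real.sqrt k : ℂ)) • Jp N + ((Real.sqrt k : ℝ) : ℂ) • Jm N).mulVec
        ((NormedSpace.exp (-((Real.log k / 2 : ℝ) : ℂ) • Jz N)).mulVec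
          ((NormedSpace.exp (-(Complex.I * ((Real.pi : ℝ) / 2 : ℝ)) • Jy N)).mulVec
            (Pi.single a 1)))
      = ((2 * (a : ℝ) - ((N : ℝ) - 1) : ℝ) : ℂ) •
          (NormedSpace.exp (-((Real.log k / 2 : ℝ) : ℂ) • Jz N)).mulVec
            ((NormedSpace.exp (-(Complex.I * ((Real.pi : ℝ) / 2 : ℝ)) • Jy N)).mulVec
              (Pi.single a 1)) :=
  squeezed_eigenvector_general N k hk a
end
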